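/- arXiv:math/0511639 — 5 statements merged into one kernel-verified Lean document; each statement's English description precedes it below -/
import Mathlib

section
/- Let Ω = {(x,y) ∈ ℝ × ℝ : x − y ∈ ℤ} with the subspace topology from ℝ². Define φ : ℝ → ℝ by φ(x) = 0 if x ≤ 1/2 and φ(x) = 1 otherwise, and F : Ω → ℝ by F(x,y) = φ(y) − φ(x). Then F is continuous at every diagonal point (x,x) ∈ Ω, but F is not continuous at the point (1/2, 3/2) ∈ Ω. -/
/-! The difference `x - y` is an integer-valued continuous function on `Ω`, hence locally
constant; so near a diagonal point every point of `Ω` is diagonal, where `F` vanishes.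
At a point `(1/2, y)` with `y > 1/2`, `F = 1`, while `F` vanishes at the nearby points
`(1/2 + t, y + t)`, `t > 0`. -/

def IntRel : Set (ℝ × ℝ) := {p | ∃ n : ℤ, p.1 - p.2 = (n : ℝ)}

noncomputable def phi : ℝ → ℝ := fun x => if x ≤ 1/2 then 0 else 1

noncomputable def Fmor : IntRel → ℝ := fun p => phi (p : ℝ × ℝ).2 - phi (p : ℝ × ℝ).1

open Filter Topology

lemma eventually_fst_sub_snd_eq (p : IntRel) :
    ∀ᶠ q : IntRel in 𝓝 p, (q : ℝ × ℝ).1 - (q : ℝ × ℝ).2 = (p : ℝ × ℝ).1 - (p : ℝ × ℝ).2 := by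
  have hcont : Continuous fun q : IntRel => (q : ℝ × ℝ).1 - (q : ℝ × ℝ).2 := by fun_prop
  have hclose : ∀ᶠ q : IntRel in 𝓝 p,
      dist ((q : ℝ × ℝ).1 - (q : ℝ × ℝ).2) ((p : ℝ × ℝ).1 - (p : ℝ × ℝ).2) < 1 :=
    hcont.continuousAt.eventually (Metric.ball_mem_nhds _ one_pos)
  filter_upwards [hclose] with q hq
  obtain ⟨m, hm⟩ := q.2
  obtain ⟨n, hn⟩ := p.2
  rw [hm, hn, Int.dist_cast_real] at hq
  have hmn : m = n := by_contra fun hne => (Int.pairwise_one_le_dist hne).not_gt hq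
  rw [hm, hn, hmn]

lemma phi_of_le {x : ℝ} (hx : x ≤ 1/2) : phi x = 0 := if_pos hx

lemma phi_of_lt {x : ℝ} (hx : 1/2 < x) : phi x = 1 := if_neg hx.not_ge

lemma Fmor_eq_zero_of_fst_eq_snd {q : IntRel} (h : (q : ℝ × ℝ).1 = (q : ℝ × ℝ).2) :
    Fmor q = 0 := by
  simp [Fmor, h]

lemma Fmor_eq_zero_of_lt {q : IntRel} (h₁ : 1/2 < (q : ℝ × ℝ).1) (h₂ : 1/2 < (q : ℝ × ℝ).2) :
    Fmor q = 0 := by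
  simp [Fmor, phi_of_lt h₁, phi_of_lt h₂]

lemma continuousAt_Fmor_of_fst_eq_snd {p : IntRel} (h : (p : ℝ × ℝ).1 = (p : ℝ × ℝ).2) :
    ContinuousAt Fmor p := by
  have hzero : Fmor =ᶠ[𝓝 p] fun _ => 0 := by
    filter_upwards [eventually_fst_sub_snd_eq p] with q hq
    exact Fmor_eq_zero_of_fst_eq_snd (by linarith)
  exact continuousAt_const.congr hzero.symm

lemma not_continuousAt_Fmor_of_fst_eq_half {p : IntRel} (h₁ : (p : ℝ × ℝ).1 = 1/2)
    (h₂ : 1/2 < (p : ℝ × ℝ).2) : ¬ ContinuousAt Fmor p := by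
  intro hc
  let shift : ℝ → IntRel := fun t => ⟨((p : ℝ × ℝ).1 + t, (p : ℝ × ℝ).2 + t), by
    obtain ⟨n, hn⟩ := p.2
    exact ⟨n, by rw [← hn]; ring⟩⟩
  have hshift : Tendsto shift (𝓝[>] 0) (𝓝 p) := by
    have hcont : Continuous shift := Continuous.subtype_mk (by fun_prop) _
    have h := (hcont.tendsto 0).mono_left (nhdsWithin_le_nhds (s := Set.Ioi 0))
    simpa [shift] using h
  have hlim : Tendsto (Fmor ∘ shift) (𝓝[>] 0) (𝓝 1) := by
    have hval : Fmor p = 1 := by simp [Fmor, phi_of_lt h₂, phi_of_le h₁.le]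
    simpa [hval] using hc.tendsto.comp hshift
  have hzero : Fmor ∘ shift =ᶠ[𝓝[>] 0] fun _ => 0 := by
    filter_upwards [self_mem_nhdsWithin] with t (ht : 0 < t)
    exact Fmor_eq_zero_of_lt (by simp [shift]; linarith) (by simp [shift]; linarith)
  exact one_ne_zero (tendsto_nhds_unique hlim (tendsto_const_nhds.congr' hzero.symm))

/-- `F` is continuous at every diagonal point of the integer-difference groupoid,
but not at the point `(1/2, 3/2)`. -/
theorem stmt3 :
    (∀ x : ℝ, ContinuousAt Fmor (⟨(x, x), ⟨0, by simp⟩⟩ : IntRel)) ∧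
    ¬ ContinuousAt Fmor (⟨(1/2, 3/2), ⟨-1, by norm_num⟩⟩ : IntRel) :=
  ⟨fun _ => continuousAt_Fmor_of_fst_eq_snd rfl,
    not_continuousAt_Fmor_of_fst_eq_half rfl (by norm_num)⟩
end

section
/- Let Ω be a topological groupoid on B such that for each v ∈ B the restricted target map β_v : α⁻¹({v}) → B, x ↦ β(x), is an open map. Let Ω' be a topological groupoid and F : Ω → Ω' an algebraic morphism of groupoids which is continuous at every unit ũ, u ∈ B. Then F is continuous everywhere on Ω. -/
/-- A groupoid on a base `B`: source `α`, target `β`, object inclusion `unit`,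
partial multiplication `mul` (with axioms only required on composable pairs),
and inversion `inv`. -/
structure Gpd (Ω : Type*) (B : Type*) where
  α : Ω → B
  β : Ω → B
  unit : B → Ω
  mul : Ω → Ω → Ω
  inv : Ω → Ω
  α_mul : ∀ x y, α x = β y → α (mul x y) = α y
  β_mul : ∀ x y, α x = β y → β (mul x y) = β x
  mul_assoc : ∀ x y z, α x = β y → α y = β z → mul (mul x y) z = mul x (mul y z)
  α_unit : ∀ u, α (unit u) = u
  β_unit : ∀ u, β (unit u) = u
  mul_unit : ∀ x, mul x (unit (α x)) = x
  unit_mul : ∀ x, mul (unit (β x)) x = x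
  α_inv : ∀ x, α (inv x) = β x
  β_inv : ∀ x, β (inv x) = α x
  inv_mul : ∀ x, mul (inv x) x = unit (α x)
  mul_inv : ∀ x, mul x (inv x) = unit (β x)

/-- If each restricted target map `β_v : Ω_v → B` is open, then any groupoid
morphism continuous at every unit is continuous everywhere. -/
theorem stmt7 {Ω B Ω' B' : Type*} [TopologicalSpace Ω] [TopologicalSpace B]
    [TopologicalSpace Ω'] [TopologicalSpace B']
    (G : Gpd Ω B) (G' : Gpd Ω' B')
    (hα : Continuous G.α) (hβ : Continuous G.β) (hunit : Continuous G.unit)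
    (hinv : Continuous G.inv)
    (hm : ContinuousOn (fun p : Ω × Ω => G.mul p.1 p.2) {p | G.α p.1 = G.β p.2})
    (hα' : Continuous G'.α) (hβ' : Continuous G'.β) (hunit' : Continuous G'.unit)
    (hinv' : Continuous G'.inv)
    (hm' : ContinuousOn (fun p : Ω' × Ω' => G'.mul p.1 p.2) {p | G'.α p.1 = G'.β p.2})
    (hopen : ∀ v : B, IsOpenMap (fun x : {x : Ω // G.α x = v} => G.β x.1))
    (F : Ω → Ω')
    (hcomp : ∀ x y, G.α x = G.β y → G'.α (F x) = G'.β (F y))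
    (hmul : ∀ x y, G.α x = G.β y → F (G.mul x y) = G'.mul (F x) (F y))
    (hcont : ∀ u : B, ContinuousAt F (G.unit u)) :
    Continuous F := by
  rw [continuous_iff_continuousAt]
  intro x
  rw [ContinuousAt, Filter.tendsto_def]
  intro W hW
  obtain ⟨W', hW'sub, hW'open, hbW' : F x ∈ W'⟩ := mem_nhds_iff.mp hW
  -- abbreviations
  set a := F (G.unit (G.β x)) with ha
  set c := F (G.unit (G.α x)) with hc
  have hab : G'.mul a (F x) = F x := by
    rw [ha, ← hmul _ _ (by rw [G.α_unit]), G.unit_mul]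
  have hbc : G'.mul (F x) c = F x := by
    rw [hc, ← hmul _ _ (by rw [G.β_unit]), G.mul_unit]
  have hS1 : G'.α (F x) = G'.β c := hcomp x (G.unit (G.α x)) (by rw [G.β_unit])
  have hS2 : G'.α a = G'.β (F x) := hcomp (G.unit (G.β x)) x (by rw [G.α_unit])
  set S : Set (Ω' × Ω') :=
    {p : Ω' × Ω' | G'.α (F x) = G'.β p.2 ∧ G'.α p.1 = G'.β (F x)} with hSdef
  -- continuity of p ↦ p.1 * (F x * p.2) on S
  have inner : ContinuousOn (fun p : Ω' × Ω' => G'.mul (F x) p.2) S := by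
    refine hm'.comp (continuous_const.prodMk continuous_snd).continuousOn ?_
    intro p hp
    exact hp.1
  have outer : ContinuousOn (fun p : Ω' × Ω' => G'.mul p.1 (G'.mul (F x) p.2)) S := by
    refine (hm'.comp (continuous_fst.continuousOn.prodMk inner) ?_ : _)
    intro p hp
    show G'.α p.1 = G'.β (G'.mul (F x) p.2)
    rw [G'.β_mul _ _ hp.1]
    exact hp.2
  have hacS : (a, c) ∈ S := ⟨hS1, hS2⟩
  have hcw : ContinuousWithinAt (fun p : Ω' × Ω' => G'.mul p.1 (G'.mul (F x) p.2)) S (a, c) :=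
    outer (a, c) hacS
  have hval : G'.mul a (G'.mul (F x) c) = F x := by rw [hbc, hab]
  have hmem : (fun p : Ω' × Ω' => G'.mul p.1 (G'.mul (F x) p.2)) ⁻¹' W' ∈
      nhdsWithin (a, c) S := by
    apply hcw
    show W' ∈ nhds (G'.mul a (G'.mul (F x) c))
    rw [hval]
    exact hW'open.mem_nhds hbW'
  rw [mem_nhdsWithin] at hmem
  obtain ⟨O, hOopen, hacO, hOsub⟩ := hmem
  obtain ⟨A, C, hAopen, hCopen, haA, hcC, hACsub⟩ := isOpen_prod_iff.mp hOopen a c hacO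
  -- neighborhood V of x in the α-fiber direction
  have t1 : Filter.Tendsto (fun y => F (G.mul y (G.inv x)))
      (nhdsWithin x {y | G.α y = G.α x}) (nhds a) := by
    have c1 : ContinuousWithinAt (fun y => G.mul y (G.inv x)) {y | G.α y = G.α x} x := by
      refine (hm.comp (continuous_id.prodMk continuous_const).continuousOn ?_) x rfl
      intro y hy
      show G.α y = G.β (G.inv x)
      rw [G.β_inv]; exact hy
    have : Filter.Tendsto (fun y => G.mul y (G.inv x))
        (nhdsWithin x {y | G.α y = G.α x}) (nhds (G.unit (G.β x))) := by
      have := c1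
      rwa [ContinuousWithinAt, G.mul_inv] at this
    exact Filter.Tendsto.comp (hcont (G.β x)) this
  have hVmem : (fun y => F (G.mul y (G.inv x))) ⁻¹' A ∈
      nhdsWithin x {y | G.α y = G.α x} := t1 (hAopen.mem_nhds haA)
  rw [mem_nhdsWithin] at hVmem
  obtain ⟨V, hVopen, hxV, hVsub⟩ := hVmem
  -- neighborhood V₂ × V₃ of (x,x) for (y,z) ↦ F (y⁻¹ z)
  have t2 : Filter.Tendsto (fun p : Ω × Ω => F (G.mul (G.inv p.1) p.2))
      (nhdsWithin (x, x) {p : Ω × Ω | G.β p.1 = G.β p.2}) (nhds c) := by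
    have c2 : ContinuousWithinAt (fun p : Ω × Ω => G.mul (G.inv p.1) p.2)
        {p : Ω × Ω | G.β p.1 = G.β p.2} (x, x) := by
      refine (hm.comp ((hinv.comp continuous_fst).prodMk continuous_snd).continuousOn ?_)
        (x, x) rfl
      intro p hp
      show G.α (G.inv p.1) = G.β p.2
      rw [G.α_inv]; exact hp
    have : Filter.Tendsto (fun p : Ω × Ω => G.mul (G.inv p.1) p.2)
        (nhdsWithin (x, x) {p : Ω × Ω | G.β p.1 = G.β p.2}) (nhds (G.unit (G.α x))) := by
      have := c2
      rwa [ContinuousWithinAt, G.inv_mul] at this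
    exact Filter.Tendsto.comp (hcont (G.α x)) this
  have hV2mem : (fun p : Ω × Ω => F (G.mul (G.inv p.1) p.2)) ⁻¹' C ∈
      nhdsWithin (x, x) {p : Ω × Ω | G.β p.1 = G.β p.2} := t2 (hCopen.mem_nhds hcC)
  rw [mem_nhdsWithin] at hV2mem
  obtain ⟨O₂, hO₂open, hxxO₂, hO₂sub⟩ := hV2mem
  obtain ⟨V₂, V₃, hV₂open, hV₃open, hxV₂, hxV₃, hV23sub⟩ := isOpen_prod_iff.mp hO₂open x x hxxO₂
  -- open image via the fiber target map
  set D : Set B := (fun p : {y : Ω // G.α y = G.α x} => G.β p.1) ''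
    (Subtype.val ⁻¹' (V ∩ V₂)) with hDdef
  have hDopen : IsOpen D :=
    hopen (G.α x) _ ((hVopen.inter hV₂open).preimage continuous_subtype_val)
  have hβxD : G.β x ∈ D := ⟨⟨x, rfl⟩, ⟨hxV, hxV₂⟩, rfl⟩
  -- the final neighborhood
  refine Filter.mem_of_superset
    (((hV₃open.inter (hDopen.preimage hβ)).mem_nhds ⟨hxV₃, hβxD⟩ : _)) ?_
  rintro z ⟨hzV₃, hzD⟩
  obtain ⟨⟨y, hyα⟩, hyVV₂, hyβ⟩ := hzD
  change G.β y = G.β z at hyβ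
  simp only [Set.mem_preimage, Set.mem_inter_iff] at hyVV₂
  obtain ⟨hyV, hyV₂⟩ := hyVV₂
  -- hyα : G.α y = G.α x, hyβ : G.β y = G.β z
  have comp1 : G.α (G.inv y) = G.β z := by rw [G.α_inv]; exact hyβ
  have hβs : G.β (G.mul (G.inv y) z) = G.α x := by
    rw [G.β_mul _ _ comp1, G.β_inv]; exact hyα
  have hαxβs : G.α x = G.β (G.mul (G.inv y) z) := hβs.symm
  have compy : G.α y = G.β (G.inv x) := by rw [G.β_inv]; exact hyα
  have hαp : G.α (G.mul y (G.inv x)) = G.β x := by rw [G.α_mul _ _ compy, G.α_inv]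
  have hβxs : G.β (G.mul x (G.mul (G.inv y) z)) = G.β x := G.β_mul _ _ hαxβs
  have compouter : G.α (G.mul y (G.inv x)) = G.β (G.mul x (G.mul (G.inv y) z)) := by
    rw [hαp, hβxs]
  have key : G.mul (G.mul y (G.inv x)) (G.mul x (G.mul (G.inv y) z)) = z := by
    rw [G.mul_assoc y (G.inv x) _ compy (by rw [G.α_inv, hβxs]),
        ← G.mul_assoc (G.inv x) x _ (by rw [G.α_inv]) hαxβs,
        G.inv_mul, ← hβs, G.unit_mul,
        ← G.mul_assoc y (G.inv y) z (by rw [G.β_inv]) comp1,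
        G.mul_inv, hyβ, G.unit_mul]
  have hFz : F z = G'.mul (F (G.mul y (G.inv x))) (G'.mul (F x) (F (G.mul (G.inv y) z))) := by
    conv_lhs => rw [← key]
    rw [hmul _ _ compouter, hmul _ _ hαxβs]
  have hFpA : F (G.mul y (G.inv x)) ∈ A := hVsub ⟨hyV, hyα⟩
  have hFsC : F (G.mul (G.inv y) z) ∈ C := hO₂sub (show (y, z) ∈ O₂ ∩ {p : Ω × Ω | G.β p.1 = G.β p.2} from ⟨hV23sub ⟨hyV₂, hzV₃⟩, hyβ⟩)
  have hpS : (F (G.mul y (G.inv x)), F (G.mul (G.inv y) z)) ∈ S :=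
    ⟨hcomp x _ hαxβs, hcomp _ x hαp⟩
  have : G'.mul (F (G.mul y (G.inv x))) (G'.mul (F x) (F (G.mul (G.inv y) z))) ∈ W' :=
    hOsub ⟨hACsub ⟨hFpA, hFsC⟩, hpS⟩
  exact hW'sub (hFz ▸ this)
end

section
/- Let Ω be a topological groupoid on B with continuous α, β, inversion, and multiplication, and suppose F : Ω → Ω' is a morphism into a topological groupoid Ω' that is continuous at every unit. If (x_i) is a net in Ω converging to x with α(x_i) = α(x) for all i, then F(x_i) → F(x). -/
/-!
Right translation by `x⁻¹` carries the `α`-fibre of `x` into the `α`-fibre of `β x`, so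
`x_i x⁻¹ → x x⁻¹ = 1_{β x}` and continuity of `F` at that unit gives `F(x_i x⁻¹) → F(1_{β x})`.
Multiplying on the right by `F x` in `Ω'` then yields
`F(x_i) = F(x_i x⁻¹) F(x) → F(1_{β x}) F(x) = F(x)`.
-/

open Filter Topology

namespace Gpd

variable {Ω B : Type*} (G : Gpd Ω B)

theorem mul_inv_mul_cancel {x y : Ω} (h : G.α y = G.α x) :
    G.mul (G.mul y (G.inv x)) x = y := by
  have hyx : G.α y = G.β (G.inv x) := by rw [G.β_inv, h]
  rw [G.mul_assoc _ _ _ hyx (G.α_inv x), G.inv_mul, ← h, G.mul_unit]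

theorem α_mul_inv {x y : Ω} (h : G.α y = G.α x) : G.α (G.mul y (G.inv x)) = G.β x := by
  rw [G.α_mul _ _ (by rw [G.β_inv, h]), G.α_inv]

theorem tendsto_mul_right [TopologicalSpace Ω]
    (hm : ContinuousOn (fun p : Ω × Ω => G.mul p.1 p.2) {p | G.α p.1 = G.β p.2})
    {ι : Type*} {l : Filter ι} {f : ι → Ω} {a b : Ω} (hf : Tendsto f l (𝓝 a))
    (ha : G.α a = G.β b) (hfb : ∀ i, G.α (f i) = G.β b) :
    Tendsto (fun i => G.mul (f i) b) l (𝓝 (G.mul a b)) :=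
  (hm (a, b) ha).tendsto.comp <| tendsto_nhdsWithin_iff.mpr
    ⟨hf.prodMk_nhds tendsto_const_nhds, Eventually.of_forall hfb⟩

end Gpd

theorem stmt8_general {Ω B Ω' B' : Type*} [TopologicalSpace Ω]
    [TopologicalSpace Ω']
    (G : Gpd Ω B) (G' : Gpd Ω' B')
    (hm : ContinuousOn (fun p : Ω × Ω => G.mul p.1 p.2) {p | G.α p.1 = G.β p.2})
    (hm' : ContinuousOn (fun p : Ω' × Ω' => G'.mul p.1 p.2) {p | G'.α p.1 = G'.β p.2})
    (F : Ω → Ω')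
    (hcomp : ∀ x y, G.α x = G.β y → G'.α (F x) = G'.β (F y))
    (hmul : ∀ x y, G.α x = G.β y → F (G.mul x y) = G'.mul (F x) (F y))
    (hcont : ∀ u : B, ContinuousAt F (G.unit u))
    {ι : Type*} (l : Filter ι) (x_ : ι → Ω) (x : Ω)
    (hlim : Filter.Tendsto x_ l (nhds x))
    (hfib : ∀ i, G.α (x_ i) = G.α x) :
    Filter.Tendsto (fun i => F (x_ i)) l (nhds (F x)) := by
  have hαu : G.α (G.unit (G.β x)) = G.β x := G.α_unit _
  have htrans : Tendsto (fun i => G.mul (x_ i) (G.inv x)) l (𝓝 (G.unit (G.β x))) := by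
    simpa only [G.mul_inv] using
      G.tendsto_mul_right hm hlim (G.β_inv x).symm fun i => by rw [G.β_inv, hfib]
  have hF : Tendsto (fun i => G'.mul (F (G.mul (x_ i) (G.inv x))) (F x)) l
      (𝓝 (G'.mul (F (G.unit (G.β x))) (F x))) :=
    G'.tendsto_mul_right hm' ((hcont _).tendsto.comp htrans) (hcomp _ _ hαu)
      fun i => hcomp _ _ (G.α_mul_inv (hfib i))
  have hunit_mul : G'.mul (F (G.unit (G.β x))) (F x) = F x := by
    rw [← hmul _ _ hαu, G.unit_mul]
  rw [hunit_mul] at hF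
  refine hF.congr fun i => ?_
  rw [← hmul _ _ (G.α_mul_inv (hfib i)), G.mul_inv_mul_cancel (hfib i)]

/-- Key net argument: for a net lying in a single `α`-fibre converging to `x`,
continuity of a morphism at the units already gives `F(x_i) → F(x)`. -/
theorem stmt8 {Ω B Ω' B' : Type*} [TopologicalSpace Ω] [TopologicalSpace B]
    [TopologicalSpace Ω'] [TopologicalSpace B']
    (G : Gpd Ω B) (G' : Gpd Ω' B')
    (hα : Continuous G.α) (hβ : Continuous G.β) (hunit : Continuous G.unit)
    (hinv : Continuous G.inv)
    (hm : ContinuousOn (fun p : Ω × Ω => G.mul p.1 p.2) {p | G.α p.1 = G.β p.2})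
    (hα' : Continuous G'.α) (hβ' : Continuous G'.β) (hunit' : Continuous G'.unit)
    (hinv' : Continuous G'.inv)
    (hm' : ContinuousOn (fun p : Ω' × Ω' => G'.mul p.1 p.2) {p | G'.α p.1 = G'.β p.2})
    (F : Ω → Ω')
    (hcomp : ∀ x y, G.α x = G.β y → G'.α (F x) = G'.β (F y))
    (hmul : ∀ x y, G.α x = G.β y → F (G.mul x y) = G'.mul (F x) (F y))
    (hcont : ∀ u : B, ContinuousAt F (G.unit u))
    {ι : Type*} (l : Filter ι) [l.NeBot] (x_ : ι → Ω) (x : Ω)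
    (hlim : Filter.Tendsto x_ l (nhds x))
    (hfib : ∀ i, G.α (x_ i) = G.α x) :
    Filter.Tendsto (fun i => F (x_ i)) l (nhds (F x)) :=
  stmt8_general G G' hm hm' F hcomp hmul hcont l x_ x hlim hfib
end

section
/- Let Ω be a transitive topological groupoid on B (a single orbit) such that for each v ∈ B the map β_v : Ω_v → B is open. Let F : Ω → Ω' be an algebraic morphism into a topological groupoid Ω' which is continuous on some open set containing the base subgroupoid B̃ of Ω. Then F is continuous everywhere on Ω. -/
/-- For a transitive topological groupoid with all maps `β_v` open, a morphism
continuous on an open set containing the base subgroupoid is continuous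
everywhere. -/
theorem stmt14 {Ω B Ω' B' : Type*} [TopologicalSpace Ω] [TopologicalSpace B]
    [TopologicalSpace Ω'] [TopologicalSpace B']
    (G : Gpd Ω B) (G' : Gpd Ω' B')
    (hα : Continuous G.α) (hβ : Continuous G.β) (hunit : Continuous G.unit)
    (hinv : Continuous G.inv)
    (hm : ContinuousOn (fun p : Ω × Ω => G.mul p.1 p.2) {p | G.α p.1 = G.β p.2})
    (hα' : Continuous G'.α) (hβ' : Continuous G'.β) (hunit' : Continuous G'.unit)
    (hinv' : Continuous G'.inv)
    (hm' : ContinuousOn (fun p : Ω' × Ω' => G'.mul p.1 p.2) {p | G'.α p.1 = G'.β p.2})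
    (htrans : ∀ u v : B, ∃ x : Ω, G.β x = u ∧ G.α x = v)
    (hopen : ∀ v : B, IsOpenMap (fun x : {x : Ω // G.α x = v} => G.β x.1))
    (F : Ω → Ω')
    (hcomp : ∀ x y, G.α x = G.β y → G'.α (F x) = G'.β (F y))
    (hmul : ∀ x y, G.α x = G.β y → F (G.mul x y) = G'.mul (F x) (F y))
    (W : Set Ω) (hW : IsOpen W) (hWB : Set.range G.unit ⊆ W)
    (hcont : ContinuousOn F W) :
    Continuous F := by
  rw [continuous_def]
  intro V' hV'
  rw [isOpen_iff_forall_mem_open]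
  intro x hxV
  have heu : G.unit (G.β x) ∈ W := hWB ⟨_, rfl⟩
  have hev : G.unit (G.α x) ∈ W := hWB ⟨_, rfl⟩
  have hc1 : G'.α (F (G.unit (G.β x))) = G'.β (F x) := hcomp _ _ (G.α_unit _)
  have hc2 : G'.α (F x) = G'.β (F (G.unit (G.α x))) := hcomp _ _ (G.β_unit _).symm
  -- continuity of Ψ on S
  have hF1 : ContinuousOn (fun p : Ω × Ω => F p.1)
      ({p : Ω × Ω | G.α p.1 = G.β x ∧ G.β p.2 = G.α x} ∩ W ×ˢ W) :=
    hcont.comp continuous_fst.continuousOn (fun p hp => hp.2.1)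
  have hF2 : ContinuousOn (fun p : Ω × Ω => F p.2)
      ({p : Ω × Ω | G.α p.1 = G.β x ∧ G.β p.2 = G.α x} ∩ W ×ˢ W) :=
    hcont.comp continuous_snd.continuousOn (fun p hp => hp.2.2)
  have hΨ1 : ContinuousOn (fun p : Ω × Ω => G'.mul (F p.1) (F x))
      ({p : Ω × Ω | G.α p.1 = G.β x ∧ G.β p.2 = G.α x} ∩ W ×ˢ W) :=
    hm'.comp (hF1.prodMk continuousOn_const) (fun p hp => hcomp _ _ hp.1.1)
  have hΨon : ContinuousOn
      (fun p : Ω × Ω => G'.mul (G'.mul (F p.1) (F x)) (F p.2))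
      ({p : Ω × Ω | G.α p.1 = G.β x ∧ G.β p.2 = G.α x} ∩ W ×ˢ W) :=
    hm'.comp (hΨ1.prodMk hF2)
      (fun p hp => by
        show G'.α (G'.mul (F p.1) (F x)) = G'.β (F p.2)
        rw [G'.α_mul _ _ (hcomp _ _ hp.1.1)]
        exact hcomp _ _ hp.1.2.symm)
  have hptS : (G.unit (G.β x), G.unit (G.α x)) ∈
      ({p : Ω × Ω | G.α p.1 = G.β x ∧ G.β p.2 = G.α x} ∩ W ×ˢ W) :=
    ⟨⟨G.α_unit _, G.β_unit _⟩, heu, hev⟩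
  have hΨ := hΨon _ hptS
  have hval : G'.mul (G'.mul (F (G.unit (G.β x))) (F x)) (F (G.unit (G.α x))) = F x := by
    rw [← hmul _ _ (G.α_unit (G.β x)), G.unit_mul, ← hmul _ _ (G.β_unit (G.α x)).symm,
      G.mul_unit]
  have hT : Filter.Tendsto (fun p : Ω × Ω => G'.mul (G'.mul (F p.1) (F x)) (F p.2))
      (nhdsWithin (G.unit (G.β x), G.unit (G.α x))
        ({p : Ω × Ω | G.α p.1 = G.β x ∧ G.β p.2 = G.α x} ∩ W ×ˢ W))
      (nhds (F x)) := by
    simpa [ContinuousWithinAt, hval] using hΨ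
  have hmem : (fun p : Ω × Ω => G'.mul (G'.mul (F p.1) (F x)) (F p.2)) ⁻¹' V' ∈
      nhdsWithin (G.unit (G.β x), G.unit (G.α x))
        ({p : Ω × Ω | G.α p.1 = G.β x ∧ G.β p.2 = G.α x} ∩ W ×ˢ W) :=
    hT (hV'.mem_nhds hxV)
  obtain ⟨t, htopen, hptt, htsub⟩ := mem_nhdsWithin.mp hmem
  obtain ⟨U₁, U₂, hU₁o, hU₂o, hU₁m, hU₂m, hU₁₂⟩ := isOpen_prod_iff.mp htopen _ _ hptt
  -- continuity of (y, z) ↦ y⁻¹ z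
  have hCon : ContinuousOn (fun p : Ω × Ω => G.mul (G.inv p.1) p.2)
      {p : Ω × Ω | G.β p.1 = G.β p.2} :=
    hm.comp
      (((hinv.comp continuous_fst).continuousOn).prodMk continuous_snd.continuousOn)
      (fun p hp => by show G.α (G.inv p.1) = G.β p.2; rw [G.α_inv]; exact hp)
  have hCw := hCon (x, x) (show G.β x = G.β x from rfl)
  have hCt : Filter.Tendsto (fun p : Ω × Ω => G.mul (G.inv p.1) p.2)
      (nhdsWithin (x, x) {p : Ω × Ω | G.β p.1 = G.β p.2})
      (nhds (G.unit (G.α x))) := by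
    simpa [ContinuousWithinAt, G.inv_mul] using hCw
  have h2mem : (fun p : Ω × Ω => G.mul (G.inv p.1) p.2) ⁻¹' (U₂ ∩ W) ∈
      nhdsWithin (x, x) {p : Ω × Ω | G.β p.1 = G.β p.2} :=
    hCt ((hU₂o.inter hW).mem_nhds ⟨hU₂m, hev⟩)
  obtain ⟨t', ht'o, hxt', ht'sub⟩ := mem_nhdsWithin.mp h2mem
  obtain ⟨A, C, hAo, hCo, hxA, hxC, hAC⟩ := isOpen_prod_iff.mp ht'o x x hxt'
  -- the map y ↦ y * x⁻¹ on the fiber over α x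
  have hmulx : Continuous (fun y : {y : Ω // G.α y = G.α x} => G.mul y.1 (G.inv x)) :=
    hm.comp_continuous (continuous_subtype_val.prodMk continuous_const)
      (fun y => show G.α y.1 = G.β (G.inv x) by rw [G.β_inv]; exact y.2)
  have hMo : IsOpen {y : {y : Ω // G.α y = G.α x} | y.1 ∈ A ∧ G.mul y.1 (G.inv x) ∈ U₁ ∩ W} :=
    (hAo.preimage continuous_subtype_val).inter (((hU₁o.inter hW)).preimage hmulx)
  have hO : IsOpen ((fun y : {y : Ω // G.α y = G.α x} => G.β y.1) ''
      {y : {y : Ω // G.α y = G.α x} | y.1 ∈ A ∧ G.mul y.1 (G.inv x) ∈ U₁ ∩ W}) :=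
    hopen (G.α x) _ hMo
  have hβxO : G.β x ∈ (fun y : {y : Ω // G.α y = G.α x} => G.β y.1) ''
      {y : {y : Ω // G.α y = G.α x} | y.1 ∈ A ∧ G.mul y.1 (G.inv x) ∈ U₁ ∩ W} :=
    ⟨⟨x, rfl⟩, ⟨hxA, by rw [G.mul_inv]; exact ⟨hU₁m, heu⟩⟩, rfl⟩
  refine ⟨C ∩ G.β ⁻¹' ((fun y : {y : Ω // G.α y = G.α x} => G.β y.1) ''
      {y : {y : Ω // G.α y = G.α x} | y.1 ∈ A ∧ G.mul y.1 (G.inv x) ∈ U₁ ∩ W}),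
    ?_, hCo.inter (hO.preimage hβ), hxC, hβxO⟩
  rintro z ⟨hzC, ⟨y, hyα⟩, ⟨hyA, hyU₁⟩, hyβ⟩
  have hyβ' : G.β y = G.β z := hyβ
  have hβinv : G.α y = G.β (G.inv x) := by rw [G.β_inv]; exact hyα
  have hab1 : G.α (G.mul y (G.inv x)) = G.β x := by rw [G.α_mul _ _ hβinv, G.α_inv]
  have hbU₂ : G.mul (G.inv y) z ∈ U₂ ∩ W :=
    ht'sub (⟨hAC ⟨hyA, hzC⟩, hyβ'⟩ :
      (y, z) ∈ t' ∩ {p : Ω × Ω | G.β p.1 = G.β p.2})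
  have hβb : G.β (G.mul (G.inv y) z) = G.α x := by
    rw [G.β_mul _ _ (by rw [G.α_inv]; exact hyβ'), G.β_inv, hyα]
  have hΨab : G'.mul (G'.mul (F (G.mul y (G.inv x))) (F x)) (F (G.mul (G.inv y) z)) ∈ V' :=
    htsub (⟨hU₁₂ ⟨hyU₁.1, hbU₂.1⟩, ⟨hab1, hβb⟩, hyU₁.2, hbU₂.2⟩ :
      (G.mul y (G.inv x), G.mul (G.inv y) z) ∈
        t ∩ ({p : Ω × Ω | G.α p.1 = G.β x ∧ G.β p.2 = G.α x} ∩ W ×ˢ W))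
  have h1 : G.mul (G.mul y (G.inv x)) x = y := by
    rw [G.mul_assoc y (G.inv x) x hβinv (G.α_inv x), G.inv_mul, ← hyα, G.mul_unit]
  have h2 : G.mul y (G.mul (G.inv y) z) = z := by
    rw [← G.mul_assoc y (G.inv y) z (G.β_inv y).symm (by rw [G.α_inv]; exact hyβ'),
      G.mul_inv, hyβ', G.unit_mul]
  have e1 : F (G.mul y (G.mul (G.inv y) z)) = G'.mul (F y) (F (G.mul (G.inv y) z)) :=
    hmul _ _ (by rw [G.β_mul _ _ (by rw [G.α_inv]; exact hyβ'), G.β_inv])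
  have e2 : F y = G'.mul (F (G.mul y (G.inv x))) (F x) := by
    rw [← hmul _ _ hab1, h1]
  have hFz : F z = G'.mul (G'.mul (F (G.mul y (G.inv x))) (F x)) (F (G.mul (G.inv y) z)) := by
    conv_lhs => rw [← h2]
    rw [e1, e2]
  show F z ∈ V'
  rw [hFz]
  exact hΨab
end

section
/- Let Ω be a topological groupoid on B such that the target projection β : Ω → B is open. For each v ∈ B, suppose the map u ↦ φ(u) from B to ℝ satisfies: φ is an arbitrary function, and the map F(x) = φ(α(x)) − φ(β(x)) is continuous on Ω. If there exist u, v₀ ∈ B with v₀ in the orbit of u, v₀ ≠ u, and φ vanishes identically on some open neighborhood V₀ of v₀, then φ is continuous at u. -/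
open Filter Topology

theorem IsOpenMap.continuousAt_of_comp_eventuallyEq {X Y Z : Type*} [TopologicalSpace X]
    [TopologicalSpace Y] [TopologicalSpace Z] {f : X → Y} (hf : IsOpenMap f) {g : Y → Z}
    {h : X → Z} {x : X} (hh : ContinuousAt h x) (heq : g ∘ f =ᶠ[𝓝 x] h) :
    ContinuousAt g (f x) := by
  have hgf : Tendsto (g ∘ f) (𝓝 x) (𝓝 (g (f x))) := by
    rw [show g (f x) = h x from heq.eq_of_nhds]
    exact hh.congr' heq.symm
  exact (tendsto_map'_iff.mpr hgf).mono_left (hf.nhds_le x)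

theorem stmt17_general {Ω B : Type*} [TopologicalSpace Ω] [TopologicalSpace B]
    (G : Gpd Ω B)
    (hα : Continuous G.α)
    (hβopen : IsOpenMap G.β)
    (φ : B → ℝ)
    (hF : Continuous (fun x : Ω => φ (G.α x) - φ (G.β x)))
    (u v₀ : B)
    (horb : ∃ x : Ω, G.β x = u ∧ G.α x = v₀)
    (V₀ : Set B) (hV₀ : IsOpen V₀) (hv₀ : v₀ ∈ V₀)
    (hvanish : ∀ w ∈ V₀, φ w = 0) :
    ContinuousAt φ u := by
  obtain ⟨x, rfl, hxα⟩ := horb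
  have hφβ : (φ ∘ G.β) =ᶠ[𝓝 x] fun y => -(φ (G.α y) - φ (G.β y)) := by
    filter_upwards [hα.continuousAt (hV₀.mem_nhds (hxα ▸ hv₀))] with y hy
    simp [hvanish _ hy]
  exact hβopen.continuousAt_of_comp_eventuallyEq hF.neg.continuousAt hφβ

/-- Core of Theorem 4 (tF): if `β` is open, the coboundary
`F(x) = φ(α(x)) − φ(β(x))` is continuous, some `v₀ ≠ u` lies in the orbit of
`u`, and `φ` vanishes on a neighborhood of `v₀`, then `φ` is continuous at `u`. -/
theorem stmt17 {Ω B : Type*} [TopologicalSpace Ω] [TopologicalSpace B]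
    (G : Gpd Ω B)
    (hα : Continuous G.α) (hβ : Continuous G.β) (hunit : Continuous G.unit)
    (hinv : Continuous G.inv)
    (hm : ContinuousOn (fun p : Ω × Ω => G.mul p.1 p.2) {p | G.α p.1 = G.β p.2})
    (hβopen : IsOpenMap G.β)
    (φ : B → ℝ)
    (hF : Continuous (fun x : Ω => φ (G.α x) - φ (G.β x)))
    (u v₀ : B) (hne : v₀ ≠ u)
    (horb : ∃ x : Ω, G.β x = u ∧ G.α x = v₀)
    (V₀ : Set B) (hV₀ : IsOpen V₀) (hv₀ : v₀ ∈ V₀)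
    (hvanish : ∀ w ∈ V₀, φ w = 0) :
    ContinuousAt φ u :=
  stmt17_general G hα hβopen φ hF u v₀ horb V₀ hV₀ hv₀ hvanish
end
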